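/- arXiv:2104.07254 — 2 statements merged into one kernel-verified Lean document; each statement's English description precedes it below -/
import Mathlib

section
/- Let A_1, …, A_k ∈ M_n be nonzero positive semidefinite matrices that are pairwise orthogonal with respect to the trace inner product (tr(A_i* A_j) = 0 for i ≠ j), and let B_1, …, B_k ∈ M_n be positive semidefinite matrices. Then the following are equivalent: (a) tr(A_i) = tr(B_i) for every i ∈ {1, …, k}; (b) there exists an entanglement breaking completely positive linear map φ : M_n → M_n such that φ(A_i) = B_i for every i and tr(φ(X)) = tr(X) for every X in the linear span of {A_1, …, A_k}. -/
open Matrix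
open scoped ComplexOrder Kronecker

/-- The map `I_k ⊗ φ` acting on `k×k` block matrices with `n×n` blocks:
the `((i,r),(j,s))` entry of the output is the `(r,s)` entry of `φ` applied to
the `(i,j)`-th block of `M`. -/
def blockMap {n : ℕ} (k : ℕ)
    (φ : Matrix (Fin n) (Fin n) ℂ → Matrix (Fin n) (Fin n) ℂ)
    (M : Matrix (Fin k × Fin n) (Fin k × Fin n) ℂ) :
    Matrix (Fin k × Fin n) (Fin k × Fin n) ℂ :=
  Matrix.of fun p q => φ (Matrix.of fun r s => M (p.1, r) (q.1, s)) p.2 q.2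

/-- `φ : M_n → M_n` is completely positive if for every `k` the induced map on
`k×k` block matrices sends positive semidefinite matrices to positive
semidefinite matrices. -/
def IsCompletelyPositive {n : ℕ}
    (φ : Matrix (Fin n) (Fin n) ℂ → Matrix (Fin n) (Fin n) ℂ) : Prop :=
  ∀ (k : ℕ) (M : Matrix (Fin k × Fin n) (Fin k × Fin n) ℂ),
    M.PosSemidef → (blockMap k φ M).PosSemidef

/-- `φ : M_n → M_n` is entanglement breaking if it admits a Kraus
representation `φ(X) = Σ_j V_j X V_j*` with every `V_j` of rank at most one. -/
def IsEntanglementBreaking {n : ℕ}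
    (φ : Matrix (Fin n) (Fin n) ℂ → Matrix (Fin n) (Fin n) ℂ) : Prop :=
  ∃ (m : ℕ) (V : Fin m → Matrix (Fin n) (Fin n) ℂ),
    (∀ j, (V j).rank ≤ 1) ∧ ∀ X, φ X = ∑ j, V j * X * (V j)ᴴ

/-- The Choi matrix of `φ : M_n → M_n`: the `n²×n²` block matrix whose
`(i,j)`-th `n×n` block is `φ (E i j)`. -/
def choiMatrix {n : ℕ}
    (φ : Matrix (Fin n) (Fin n) ℂ → Matrix (Fin n) (Fin n) ℂ) :
    Matrix (Fin n × Fin n) (Fin n × Fin n) ℂ :=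
  Matrix.of fun p q => φ (Matrix.single p.1 q.1 1) p.2 q.2

section Aux

open Matrix

section SqrtCompat
open scoped MatrixOrder

noncomputable def Matrix.PosSemidef.sqrt {n : ℕ} {A : Matrix (Fin n) (Fin n) ℂ}
    (_hA : A.PosSemidef) : Matrix (Fin n) (Fin n) ℂ := CFC.sqrt A

lemma Matrix.PosSemidef.posSemidef_sqrt {n : ℕ} {A : Matrix (Fin n) (Fin n) ℂ}
    (hA : A.PosSemidef) : hA.sqrt.PosSemidef :=
  (CFC.sqrt_nonneg A).posSemidef

lemma Matrix.PosSemidef.sqrt_mul_self {n : ℕ} {A : Matrix (Fin n) (Fin n) ℂ}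
    (hA : A.PosSemidef) : hA.sqrt * hA.sqrt = A :=
  CFC.sqrt_mul_sqrt_self A hA.nonneg

end SqrtCompat

private lemma rank_vecMulVec_le' {n : ℕ} (w v : Fin n → ℂ) :
    (Matrix.vecMulVec w v).rank ≤ 1 := by
  rw [vecMulVec_eq (Fin 1)]
  exact (rank_mul_le_left _ _).trans ((rank_le_card_width _).trans (by simp))

private lemma kraus_sum_eq' {n : ℕ} {C D : Matrix (Fin n) (Fin n) ℂ}
    (hC : C.PosSemidef) (hD : D.PosSemidef)
    (c : ℝ) (X : Matrix (Fin n) (Fin n) ℂ) :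
    ∑ ab : Fin n × Fin n,
      (vecMulVec (fun x => (c : ℂ) * hD.sqrt x ab.2) fun y => hC.sqrt ab.1 y) * X *
      (vecMulVec (fun x => (c : ℂ) * hD.sqrt x ab.2) fun y => hC.sqrt ab.1 y)ᴴ
      = (((c : ℂ) * (c : ℂ)) * (C * X).trace) • D := by
  set S := hC.sqrt with hSdef
  set T := hD.sqrt with hTdef
  have hS : ∀ a r, star (S a r) = S r a := by
    intro a r
    have := hC.posSemidef_sqrt.isHermitian
    rw [← hSdef] at this
    conv_rhs => rw [← this]
    rfl
  have hT : ∀ a r, star (T a r) = T r a := by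
    intro a r
    have := hD.posSemidef_sqrt.isHermitian
    rw [← hTdef] at this
    conv_rhs => rw [← this]
    rfl
  have hCX : (C * X).trace = ∑ a, ∑ r, (S * X) a r * star (S a r) := by
    have h1 : (C * X).trace = (S * X * S).trace := by
      rw [← hC.sqrt_mul_self, Matrix.mul_assoc, Matrix.trace_mul_comm, Matrix.mul_assoc]
    rw [h1, Matrix.trace]
    refine Finset.sum_congr rfl fun a _ => ?_
    rw [Matrix.diag_apply, Matrix.mul_apply]
    exact Finset.sum_congr rfl fun r _ => by rw [hS]
  have hDxy : ∀ x y, D x y = ∑ b, T x b * star (T y b) := by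
    intro x y
    have hTT : T * T = D := hD.sqrt_mul_self
    rw [← hTT, Matrix.mul_apply]
    exact Finset.sum_congr rfl fun b _ => by rw [hT]
  ext x y
  simp only [Matrix.sum_apply, Matrix.mul_apply, conjTranspose_apply, vecMulVec_apply,
    Matrix.smul_apply, smul_eq_mul, Fintype.sum_prod_type]
  rw [hCX, hDxy x y]
  have hinner : ∀ (a b : Fin n) (r : Fin n),
      (∑ p, (c : ℂ) * T x b * S a p * X p r) = (c : ℂ) * T x b * (S * X) a r := by
    intro a b r
    rw [Matrix.mul_apply, Finset.mul_sum]
    exact Finset.sum_congr rfl fun p _ => by ring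
  calc ∑ a, ∑ b, ∑ r, (∑ p, (c : ℂ) * T x b * S a p * X p r) * star ((c : ℂ) * T y b * S a r)
      = ∑ b, ∑ a, ∑ r, ((c : ℂ) * (c : ℂ)) * ((S * X) a r * star (S a r))
          * (T x b * star (T y b)) := by
        rw [Finset.sum_comm]
        refine Finset.sum_congr rfl fun b _ => Finset.sum_congr rfl fun a _ =>
          Finset.sum_congr rfl fun r _ => ?_
        rw [hinner]
        simp only [star_mul', Complex.star_def, Complex.conj_ofReal]
        ring
    _ = ((c : ℂ) * (c : ℂ) * ∑ a, ∑ r, (S * X) a r * star (S a r))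
          * ∑ b, T x b * star (T y b) := by
        simp only [Finset.sum_mul, Finset.mul_sum]

private lemma psd_sum' {N : Type*} [Fintype N] [DecidableEq N] {ι : Type*} (s : Finset ι)
    (f : ι → Matrix N N ℂ) (h : ∀ i ∈ s, (f i).PosSemidef) :
    (∑ i ∈ s, f i).PosSemidef := by
  classical
  induction s using Finset.induction_on with
  | empty => simpa using Matrix.PosSemidef.zero
  | insert _ _ hx ih =>
    rw [Finset.sum_insert hx]
    exact ((h _ (Finset.mem_insert_self _ _)).add
      (ih fun i hi => h i (Finset.mem_insert_of_mem hi)))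

private lemma cp_of_kraus' {n m : ℕ} (φ : Matrix (Fin n) (Fin n) ℂ → Matrix (Fin n) (Fin n) ℂ)
    (V : Fin m → Matrix (Fin n) (Fin n) ℂ)
    (h : ∀ X, φ X = ∑ j, V j * X * (V j)ᴴ) :
    IsCompletelyPositive φ := by
  intro k M hM
  have key : blockMap k φ M = ∑ j, (Matrix.of fun p q : Fin k × Fin n =>
      if p.1 = q.1 then V j p.2 q.2 else 0) * M *
      (Matrix.of fun p q : Fin k × Fin n => if p.1 = q.1 then V j p.2 q.2 else 0)ᴴ := by
    ext ⟨p1, p2⟩ ⟨q1, q2⟩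
    simp only [blockMap, Matrix.of_apply, h, Matrix.sum_apply, Matrix.mul_apply,
      Matrix.conjTranspose_apply, Matrix.of_apply, Fintype.sum_prod_type, star_zero,
      mul_ite, ite_mul, zero_mul, mul_zero, Finset.sum_ite_eq, Finset.sum_ite_eq',
      Finset.mem_univ, if_true]
    simp [apply_ite (star : ℂ → ℂ), ite_mul, mul_ite, Finset.sum_ite_eq, Finset.sum_ite_eq',
      Finset.mul_sum, Finset.sum_mul]
  rw [key]
  exact psd_sum' _ _ fun j _ => hM.mul_mul_conjTranspose_same _

end Aux

/-- Interpolation by entanglement breaking maps with orthogonal inputs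
(Theorem 3.1). -/
theorem interpolation_entanglement_breaking_orthogonal
    {n k : ℕ} (A B : Fin k → Matrix (Fin n) (Fin n) ℂ)
    (hApsd : ∀ i, (A i).PosSemidef) (hAne : ∀ i, A i ≠ 0)
    (horth : ∀ i j, i ≠ j → ((A i)ᴴ * A j).trace = 0)
    (hBpsd : ∀ i, (B i).PosSemidef) :
    (∀ i, (A i).trace = (B i).trace) ↔
      ∃ φ : Matrix (Fin n) (Fin n) ℂ →ₗ[ℂ] Matrix (Fin n) (Fin n) ℂ,
        IsCompletelyPositive (⇑φ) ∧ IsEntanglementBreaking (⇑φ) ∧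
        (∀ i, φ (A i) = B i) ∧
        ∀ X ∈ Submodule.span ℂ (Set.range A), (φ X).trace = X.trace := by
  constructor
  · intro h
    classical
    set s : Fin k → ℝ := fun i => ∑ p : Fin n × Fin n, Complex.normSq (A i p.1 p.2) with hsdef
    have hA : ∀ i, (A i)ᴴ = A i := fun i => (hApsd i).isHermitian
    have hs : ∀ i, ((A i) * (A i)).trace = ((s i : ℝ) : ℂ) := by
      intro i
      have h2 : ((A i)ᴴ * (A i)).trace = ((s i : ℝ) : ℂ) := by
        rw [Matrix.trace, hsdef]
        push_cast
        rw [Fintype.sum_prod_type, Finset.sum_comm]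
        refine Finset.sum_congr rfl fun j _ => ?_
        rw [Matrix.diag_apply, Matrix.mul_apply]
        refine Finset.sum_congr rfl fun i' _ => ?_
        rw [conjTranspose_apply]
        simp [Complex.star_def, mul_comm, Complex.mul_conj]
      rw [hA i] at h2
      exact h2
    have hspos : ∀ i, 0 < s i := by
      intro i
      have hne := hAne i
      have hex : ∃ p : Fin n × Fin n, A i p.1 p.2 ≠ 0 := by
        by_contra hc
        push_neg at hc
        exact hne (by ext r c; simpa using hc (r, c))
      obtain ⟨p, hp⟩ := hex
      exact Finset.sum_pos' (fun q _ => Complex.normSq_nonneg _)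
        ⟨p, Finset.mem_univ _, Complex.normSq_pos.2 hp⟩
    have hs0 : ∀ i, ((s i : ℝ) : ℂ) ≠ 0 := fun i =>
      Complex.ofReal_ne_zero.2 (ne_of_gt (hspos i))
    have horth' : ∀ i j, i ≠ j → ((A i) * (A j)).trace = 0 := fun i j hij => by
      rw [← hA i]; exact horth i j hij
    let φ : Matrix (Fin n) (Fin n) ℂ →ₗ[ℂ] Matrix (Fin n) (Fin n) ℂ :=
      { toFun := fun X => ∑ i, (((A i) * X).trace / ((s i : ℝ) : ℂ)) • B i
        map_add' := fun X Y => by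
          simp only [Matrix.mul_add, Matrix.trace_add, add_div, add_smul,
            Finset.sum_add_distrib]
        map_smul' := fun r X => by
          simp only [Matrix.mul_smul, Matrix.trace_smul, smul_eq_mul, RingHom.id_apply,
            Finset.smul_sum, smul_smul, mul_div_assoc] }
    have hφdef : ∀ X, φ X = ∑ i, (((A i) * X).trace / ((s i : ℝ) : ℂ)) • B i := fun X => rfl
    have hφA : ∀ j, φ (A j) = B j := by
      intro j
      rw [hφdef]
      rw [Finset.sum_eq_single j
        (fun i _ hij => by rw [horth' i j hij, zero_div, zero_smul])
        (fun hj => absurd (Finset.mem_univ j) hj)]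
      rw [hs j, div_self (hs0 j), one_smul]
    have hEB : IsEntanglementBreaking (⇑φ) := by
      let c : Fin k → ℝ := fun i => (Real.sqrt (s i))⁻¹
      let W : Fin k × Fin n × Fin n → Matrix (Fin n) (Fin n) ℂ := fun j =>
        vecMulVec (fun x => ((c j.1 : ℝ) : ℂ) * (hBpsd j.1).sqrt x j.2.2)
          (fun y => (hApsd j.1).sqrt j.2.1 y)
      have hcc : ∀ i, ((c i : ℝ) : ℂ) * ((c i : ℝ) : ℂ) = ((((s i)⁻¹ : ℝ)) : ℂ) := by
        intro i
        rw [← Complex.ofReal_mul]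
        congr 1
        show (Real.sqrt (s i))⁻¹ * (Real.sqrt (s i))⁻¹ = (s i)⁻¹
        rw [← mul_inv, Real.mul_self_sqrt (le_of_lt (hspos i))]
      have hW : ∀ X, φ X = ∑ j : Fin k × Fin n × Fin n, W j * X * (W j)ᴴ := by
        intro X
        rw [Fintype.sum_prod_type, hφdef]
        refine Finset.sum_congr rfl fun i _ => ?_
        rw [kraus_sum_eq' (hApsd i) (hBpsd i) (c i) X, hcc, Complex.ofReal_inv,
          div_eq_inv_mul]
      refine ⟨Fintype.card (Fin k × Fin n × Fin n),
        fun j => W ((Fintype.equivFin (Fin k × Fin n × Fin n)).symm j),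
        fun j => rank_vecMulVec_le' _ _, fun X => ?_⟩
      rw [hW X, ← Equiv.sum_comp (Fintype.equivFin (Fin k × Fin n × Fin n)).symm
        (fun j => W j * X * (W j)ᴴ)]
    obtain ⟨m, V, hrank, hform⟩ := hEB
    refine ⟨φ, cp_of_kraus' (⇑φ) V hform, ⟨m, V, hrank, hform⟩, hφA, ?_⟩
    intro X hX
    refine Submodule.span_induction ?_ ?_ ?_ ?_ hX
    · rintro x ⟨i, rfl⟩
      rw [hφA i]
      exact (h i).symm
    · simp
    · intro x y _ _ hx hy
      rw [map_add, Matrix.trace_add, Matrix.trace_add, hx, hy]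
    · intro r x _ hx
      rw [LinearMap.map_smul, Matrix.trace_smul, Matrix.trace_smul, hx]
  · rintro ⟨φ, _, _, hφA, htrp⟩ i
    have h1 := htrp (A i) (Submodule.subset_span ⟨i, rfl⟩)
    rw [hφA i] at h1
    exact h1.symm
end

section
/- Let A_1, …, A_k ∈ M_n be nonzero positive semidefinite matrices that are pairwise orthogonal with respect to the trace inner product (tr(A_i* A_j) = 0 for i ≠ j), and let B_1, …, B_k ∈ M_n be positive semidefinite matrices. Then the following are equivalent: (a) tr(A_i) = tr(B_i) for every i ∈ {1, …, k}; (b) there exists a completely positive linear map φ : M_n → M_n such that φ(A_i) = B_i for every i and tr(φ(X)) = tr(X) for every X in the linear span of {A_1, …, A_k}. -/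
open Matrix
open scoped ComplexOrder Kronecker

lemma trace_conjTranspose_mul_self_pos {m p : Type*} [Fintype m] [Fintype p]
    {A : Matrix m p ℂ} (hA : A ≠ 0) : 0 < (Aᴴ * A).trace :=
  (posSemidef_conjTranspose_mul_self A).trace_nonneg.lt_of_ne'
    (trace_conjTranspose_mul_self_eq_zero_iff.not.mpr hA)

section CompletelyPositive

variable {n : ℕ}

lemma blockMap_sum {ι : Type*} (s : Finset ι)
    (φ : ι → Matrix (Fin n) (Fin n) ℂ → Matrix (Fin n) (Fin n) ℂ) (k : ℕ)
    (M : Matrix (Fin k × Fin n) (Fin k × Fin n) ℂ) :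
    blockMap k (∑ i ∈ s, φ i) M = ∑ i ∈ s, blockMap k (φ i) M := by
  ext p q
  simp [blockMap, Matrix.sum_apply, Finset.sum_apply]

lemma IsCompletelyPositive.sum {ι : Type*} {s : Finset ι}
    {φ : ι → Matrix (Fin n) (Fin n) ℂ → Matrix (Fin n) (Fin n) ℂ}
    (h : ∀ i ∈ s, IsCompletelyPositive (φ i)) : IsCompletelyPositive (∑ i ∈ s, φ i) :=
  fun k M hM => by
    rw [blockMap_sum]
    exact posSemidef_sum s fun i hi => h i hi k M hM

lemma blockMap_conj (V : Matrix (Fin n) (Fin n) ℂ) (k : ℕ)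
    (M : Matrix (Fin k × Fin n) (Fin k × Fin n) ℂ) :
    blockMap k (fun X => V * X * Vᴴ) M = (1 ⊗ₖ V) * M * (1 ⊗ₖ V)ᴴ := by
  ext ⟨i, r⟩ ⟨j, s⟩
  simp [blockMap, mul_apply, Fintype.sum_prod_type, one_apply, Finset.sum_mul,
    apply_ite (starRingEnd ℂ)]

lemma isCompletelyPositive_conj (V : Matrix (Fin n) (Fin n) ℂ) :
    IsCompletelyPositive (fun X => V * X * Vᴴ) :=
  fun k M hM => by
    rw [blockMap_conj]
    exact hM.mul_mul_conjTranspose_same _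

lemma vecMulVec_mul_mul_conjTranspose (a b : Fin n → ℂ) (X : Matrix (Fin n) (Fin n) ℂ) :
    vecMulVec b (star a) * X * (vecMulVec b (star a))ᴴ
      = (vecMulVec a (star a) * X).trace • vecMulVec b (star b) := by
  rw [conjTranspose_vecMulVec, star_star, vecMulVec_mul, vecMulVec_mul_vecMulVec, vecMulVec_mul,
    trace_vecMulVec, dotProduct_comm, vecMulVec_smul]

/-- Writing `A = ∑ aₜaₜ*` and `B = ∑ bᵤbᵤ*`, the map is the sum of the conjugations by
`bᵤaₜ*`. -/
lemma isCompletelyPositive_trace_mul_smul {A B : Matrix (Fin n) (Fin n) ℂ}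
    (hA : A.PosSemidef) (hB : B.PosSemidef) :
    IsCompletelyPositive (fun X => (A * X).trace • B) := by
  obtain ⟨_, a, rfl⟩ := posSemidef_iff_eq_sum_vecMulVec.mp hA
  obtain ⟨_, b, rfl⟩ := posSemidef_iff_eq_sum_vecMulVec.mp hB
  have hsum : (fun X => ((∑ t, vecMulVec (a t) (star (a t))) * X).trace •
        ∑ u, vecMulVec (b u) (star (b u)))
      = ∑ t, ∑ u, fun X =>
          vecMulVec (b u) (star (a t)) * X * (vecMulVec (b u) (star (a t)))ᴴ := by
    ext X : 1
    simp only [vecMulVec_mul_mul_conjTranspose, Finset.sum_apply, Finset.sum_mul, trace_sum,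
      Finset.sum_smul, Finset.smul_sum]
    exact Finset.sum_comm
  rw [hsum]
  exact .sum fun t _ => .sum fun u _ => isCompletelyPositive_conj _

end CompletelyPositive

section InnerSmulMap

variable {n k : ℕ}

def innerSmulMap (A B : Fin k → Matrix (Fin n) (Fin n) ℂ) :
    Matrix (Fin n) (Fin n) ℂ →ₗ[ℂ] Matrix (Fin n) (Fin n) ℂ :=
  ∑ i, (traceLinearMap (Fin n) ℂ ℂ ∘ₗ LinearMap.mulLeft ℂ (A i)ᴴ).smulRight (B i)

@[simp]
lemma innerSmulMap_apply (A B : Fin k → Matrix (Fin n) (Fin n) ℂ)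
    (X : Matrix (Fin n) (Fin n) ℂ) :
    innerSmulMap A B X = ∑ i, ((A i)ᴴ * X).trace • B i := by
  simp [innerSmulMap]

lemma innerSmulMap_apply_of_orthogonal {A : Fin k → Matrix (Fin n) (Fin n) ℂ}
    (horth : ∀ i j, i ≠ j → ((A i)ᴴ * A j).trace = 0) (B : Fin k → Matrix (Fin n) (Fin n) ℂ)
    (j : Fin k) : innerSmulMap A B (A j) = ((A j)ᴴ * A j).trace • B j := by
  rw [innerSmulMap_apply,
    Finset.sum_eq_single j (fun i _ hij => by rw [horth i j hij, zero_smul]) (by simp)]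

lemma isCompletelyPositive_innerSmulMap {A B : Fin k → Matrix (Fin n) (Fin n) ℂ}
    (hA : ∀ i, (A i).PosSemidef) (hB : ∀ i, (B i).PosSemidef) :
    IsCompletelyPositive (innerSmulMap A B) := by
  have : ⇑(innerSmulMap A B) = ∑ i, fun X => ((A i)ᴴ * X).trace • B i := by
    ext X : 1
    simp [Finset.sum_apply]
  rw [this]
  exact .sum fun i _ => isCompletelyPositive_trace_mul_smul (hA i).conjTranspose (hB i)

end InnerSmulMap

/-- Lemma 3.3: interpolation by completely positive maps with orthogonal
inputs. -/
theorem interpolation_completelyPositive_orthogonal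
    {n k : ℕ} (A B : Fin k → Matrix (Fin n) (Fin n) ℂ)
    (hApsd : ∀ i, (A i).PosSemidef) (hAne : ∀ i, A i ≠ 0)
    (horth : ∀ i j, i ≠ j → ((A i)ᴴ * A j).trace = 0)
    (hBpsd : ∀ i, (B i).PosSemidef) :
    (∀ i, (A i).trace = (B i).trace) ↔
      ∃ φ : Matrix (Fin n) (Fin n) ℂ →ₗ[ℂ] Matrix (Fin n) (Fin n) ℂ,
        IsCompletelyPositive (⇑φ) ∧
        (∀ i, φ (A i) = B i) ∧
        ∀ X ∈ Submodule.span ℂ (Set.range A), (φ X).trace = X.trace := by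
  refine ⟨fun hTr => ?_, fun ⟨φ, _, hφA, hφtr⟩ i => ?_⟩
  · have hnorm i := trace_conjTranspose_mul_self_pos (hAne i)
    let φ := innerSmulMap A fun i => ((A i)ᴴ * A i).trace⁻¹ • B i
    have hφA : ∀ i, φ (A i) = B i := fun i => by
      rw [innerSmulMap_apply_of_orthogonal horth, smul_inv_smul₀ (hnorm i).ne']
    refine ⟨φ, isCompletelyPositive_innerSmulMap hApsd fun i =>
      (hBpsd i).smul (inv_nonneg.mpr (hnorm i).le), hφA, fun X hX => ?_⟩
    have htr : Set.EqOn (traceLinearMap (Fin n) ℂ ℂ ∘ₗ φ) (traceLinearMap (Fin n) ℂ ℂ)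
        (Set.range A) := by
      rintro _ ⟨i, rfl⟩
      simp [hφA, hTr]
    exact LinearMap.eqOn_span' htr hX
  · rw [← hφtr (A i) (Submodule.subset_span ⟨i, rfl⟩), hφA i]
end
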